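/- The variance of the truncated distribution of X given X ≤ t is at most the variance of X, for X normally distributed: Var(X | X ≤ t) ≤ Var(X) for every t ∈ ℝ. -/

import Mathlib

/-!
Write `φ` for the density of `N(μ, v)`, `F = P(X ≤ t)` and `a = E[X - μ; X ≤ t]`. Since
`v φ' = -(x - μ) φ`, integrating by parts on `(-∞, t]` (Stein's identity) gives `a = -v φ(t)` and
`E[(X - μ)²; X ≤ t] = v F + (t - μ) a`. Hence, with `m = a / F` the conditional mean of `X - μ`,
`Var(X | X ≤ t) = v + m (t - μ - m)`, and `m ≤ 0`, `m ≤ t - μ` make the correction nonpositive.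
-/

open MeasureTheory ProbabilityTheory Set
open scoped NNReal ENNReal

section Cond

variable {Ω : Type*} [MeasurableSpace Ω] {ν : Measure Ω} {s : Set Ω}

lemma integral_cond (f : Ω → ℝ) : ∫ ω, f ω ∂ν[|s] = (ν.real s)⁻¹ * ∫ ω in s, f ω ∂ν := by
  rw [ProbabilityTheory.cond, integral_smul_measure, ENNReal.toReal_inv, smul_eq_mul,
    measureReal_def]

lemma variance_cond {X : Ω → ℝ} (hX : AEMeasurable X ν) :
    Var[X; ν[|s]] = (∫ ω in s, (X ω - (∫ ω in s, X ω ∂ν) / ν.real s) ^ 2 ∂ν) / ν.real s := by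
  rw [variance_eq_integral (μ := ν[|s]) (hX.restrict.smul_measure _), integral_cond,
    integral_cond]
  simp only [inv_mul_eq_div]

lemma MeasureTheory.MemLp.cond {X : Ω → ℝ} {p : ℝ≥0∞} (hX : MemLp X p ν) (hs : ν s ≠ 0) :
    MemLp X p ν[|s] :=
  (hX.restrict s).smul_measure (ENNReal.inv_ne_top.mpr hs)

end Cond

lemma integral_Iic_of_hasDerivAt_of_integrableOn {f f' : ℝ → ℝ} {a : ℝ}
    (hderiv : ∀ x ∈ Iic a, HasDerivAt f (f' x) x) (f'int : IntegrableOn f' (Iic a))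
    (fint : IntegrableOn f (Iic a)) : ∫ x in Iic a, f' x = f a := by
  simpa using integral_Iic_of_hasDerivAt_of_tendsto' hderiv f'int
    (tendsto_zero_of_hasDerivAt_of_integrableOn_Iic hderiv f'int fint)

lemma setIntegral_Iic_sub_le {ν : Measure ℝ} [IsFiniteMeasure ν] {c t : ℝ}
    (hint : IntegrableOn (fun x ↦ x - c) (Iic t) ν) :
    ∫ x in Iic t, (x - c) ∂ν ≤ (t - c) * ν.real (Iic t) := by
  rw [mul_comm, ← smul_eq_mul, ← setIntegral_const]
  exact setIntegral_mono_on hint (integrableOn_const (measure_ne_top _ _)) measurableSet_Iic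
    fun x hx ↦ by linarith [mem_Iic.mp hx]

section Gaussian

variable {μ : ℝ} {v : ℝ≥0}

lemma hasDerivAt_gaussianPDFReal (hv : v ≠ 0) (x : ℝ) :
    HasDerivAt (gaussianPDFReal μ v) (-(x - μ) / v * gaussianPDFReal μ v x) x := by
  have hsq : HasDerivAt (fun y ↦ -(y - μ) ^ 2 / (2 * v)) (-(2 * (x - μ)) / (2 * v)) x := by
    simpa using ((((hasDerivAt_id x).sub_const μ).pow 2).neg.div_const (2 * (v : ℝ)))
  refine (hsq.exp.const_mul (√(2 * Real.pi * v))⁻¹).congr_deriv ?_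
  rw [gaussianPDFReal]
  field_simp

lemma integrableOn_gaussianReal_iff (hv : v ≠ 0) {g : ℝ → ℝ} {s : Set ℝ} (hs : MeasurableSet s) :
    IntegrableOn g s (gaussianReal μ v) ↔ IntegrableOn (fun x ↦ gaussianPDFReal μ v x * g x) s := by
  rw [IntegrableOn, gaussianReal_of_var_ne_zero _ hv, restrict_withDensity hs,
    integrable_withDensity_iff_integrable_smul' (measurable_gaussianPDF μ v)
      (ae_of_all _ fun _ ↦ gaussianPDF_lt_top)]
  simp only [toReal_gaussianPDF, smul_eq_mul, IntegrableOn]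

lemma setIntegral_gaussianReal_eq (hv : v ≠ 0) {s : Set ℝ} (hs : MeasurableSet s) (g : ℝ → ℝ) :
    ∫ x in s, g x ∂gaussianReal μ v = ∫ x in s, gaussianPDFReal μ v x * g x := by
  rw [gaussianReal_of_var_ne_zero _ hv,
    setIntegral_withDensity_eq_setIntegral_toReal_smul (measurable_gaussianPDF μ v)
      (ae_of_all _ fun _ ↦ gaussianPDF_lt_top) g hs]
  simp only [toReal_gaussianPDF, smul_eq_mul]

lemma memLp_sub_gaussianReal (p : ℝ≥0) : MemLp (fun x ↦ x - μ) p (gaussianReal μ v) :=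
  (memLp_id_gaussianReal p).sub (memLp_const μ)

lemma setIntegral_Iic_sub_mul_gaussianReal (hv : v ≠ 0) {g g' : ℝ → ℝ} {t : ℝ}
    (hg : ∀ x ∈ Iic t, HasDerivAt g (g' x) x) (hg_int : IntegrableOn g (Iic t) (gaussianReal μ v))
    (hg'_int : IntegrableOn g' (Iic t) (gaussianReal μ v))
    (hxg_int : IntegrableOn (fun x ↦ (x - μ) * g x) (Iic t) (gaussianReal μ v)) :
    ∫ x in Iic t, (x - μ) * g x ∂gaussianReal μ v
      = v * ∫ x in Iic t, g' x ∂gaussianReal μ v - v * gaussianPDFReal μ v t * g t := by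
  rw [integrableOn_gaussianReal_iff hv measurableSet_Iic] at hg_int hg'_int hxg_int
  have hderiv : ∀ x ∈ Iic t, HasDerivAt (fun x ↦ gaussianPDFReal μ v x * g x)
      (gaussianPDFReal μ v x * g' x - gaussianPDFReal μ v x * ((x - μ) * g x) / v) x := by
    intro x hx
    refine ((hasDerivAt_gaussianPDFReal hv x).mul (hg x hx)).congr_deriv ?_
    field_simp
    ring
  have hFTC := integral_Iic_of_hasDerivAt_of_integrableOn hderiv
    (hg'_int.sub (hxg_int.div_const _)) hg_int
  rw [integral_sub hg'_int (hxg_int.div_const _), integral_div] at hFTC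
  rw [setIntegral_gaussianReal_eq hv measurableSet_Iic,
    setIntegral_gaussianReal_eq hv measurableSet_Iic]
  have hv' : (v : ℝ) ≠ 0 := by exact_mod_cast hv
  set A := ∫ x in Iic t, gaussianPDFReal μ v x * g' x
  set B := ∫ x in Iic t, gaussianPDFReal μ v x * ((x - μ) * g x)
  field_simp at hFTC
  linarith

lemma setIntegral_Iic_sub_gaussianReal (hv : v ≠ 0) (t : ℝ) :
    ∫ x in Iic t, (x - μ) ∂gaussianReal μ v = -(v * gaussianPDFReal μ v t) := by
  simpa using setIntegral_Iic_sub_mul_gaussianReal (μ := μ) hv (g := fun _ ↦ 1) (g' := fun _ ↦ 0)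
    (t := t) (fun x _ ↦ hasDerivAt_const x 1) (integrable_const _).integrableOn
    (integrable_const _).integrableOn
    (by simpa using (memLp_sub_gaussianReal 1).integrable le_rfl |>.integrableOn)

lemma setIntegral_Iic_sub_sq_gaussianReal (hv : v ≠ 0) (t : ℝ) :
    ∫ x in Iic t, (x - μ) ^ 2 ∂gaussianReal μ v
      = v * (gaussianReal μ v).real (Iic t) - v * gaussianPDFReal μ v t * (t - μ) := by
  have hint := (memLp_sub_gaussianReal (μ := μ) (v := v) 1).integrable le_rfl
  simpa [← sq] using setIntegral_Iic_sub_mul_gaussianReal (μ := μ) hv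
    (g := fun x ↦ x - μ) (g' := fun _ ↦ 1) (t := t)
    (fun x _ ↦ (hasDerivAt_id x).sub_const μ) hint.integrableOn (integrable_const _).integrableOn
    (by simpa [← sq] using ((memLp_sub_gaussianReal 2).integrable_sq).integrableOn)

lemma gaussianReal_Iic_ne_zero (hv : v ≠ 0) (t : ℝ) : gaussianReal μ v (Iic t) ≠ 0 :=
  fun h ↦ by simpa using gaussianReal_absolutelyContinuous' μ hv h

end Gaussian

/-- One-sided truncation of a Gaussian reduces variance: for `X ~ N(μ,σ²)`,
`Var(X | X ≤ t) ≤ σ²` for every `t ∈ ℝ`. -/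
theorem truncated_gaussian_variance_le (μ : ℝ) (v : NNReal) (hv : v ≠ 0) (t : ℝ) :
    (∫ x in Set.Iic t,
        (x - (∫ y in Set.Iic t, y ∂gaussianReal μ v)
              / ((gaussianReal μ v) (Set.Iic t)).toReal) ^ 2 ∂gaussianReal μ v)
      / ((gaussianReal μ v) (Set.Iic t)).toReal ≤ (v : ℝ) := by
  have hN : gaussianReal μ v (Iic t) ≠ 0 := gaussianReal_Iic_ne_zero hv t
  have : IsProbabilityMeasure (gaussianReal μ v)[|Iic t] := cond_isProbabilityMeasure hN
  have hF : 0 < (gaussianReal μ v).real (Iic t) := ENNReal.toReal_pos hN (measure_ne_top _ _)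
  have hsecond : ∫ x in Iic t, (x - μ) ^ 2 ∂gaussianReal μ v = v * (gaussianReal μ v).real (Iic t)
      + (t - μ) * ∫ x in Iic t, (x - μ) ∂gaussianReal μ v := by
    rw [setIntegral_Iic_sub_sq_gaussianReal hv, setIntegral_Iic_sub_gaussianReal hv]
    ring
  rw [← measureReal_def, ← variance_cond aemeasurable_id',
    ← variance_sub_const aemeasurable_id'.aestronglyMeasurable μ,
    variance_eq_sub ((memLp_sub_gaussianReal 2).cond hN)]
  simp only [Pi.pow_apply, integral_cond]
  rw [hsecond]
  set m := ((gaussianReal μ v).real (Iic t))⁻¹ * ∫ x in Iic t, (x - μ) ∂gaussianReal μ v with hm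
  have hm_nonpos : m ≤ 0 := by
    rw [hm, setIntegral_Iic_sub_gaussianReal hv]
    exact mul_nonpos_of_nonneg_of_nonpos (inv_nonneg.2 hF.le)
      (neg_nonpos.2 (mul_nonneg v.coe_nonneg (gaussianPDFReal_nonneg μ v t)))
  have hm_le : m ≤ t - μ := by
    rw [hm, inv_mul_le_iff₀ hF, mul_comm]
    exact setIntegral_Iic_sub_le ((memLp_sub_gaussianReal 1).integrable le_rfl).integrableOn
  calc _ = v + m * (t - μ - m) := by rw [hm]; field_simp; ring
    _ ≤ v := add_le_of_nonpos_right (mul_nonpos_of_nonpos_of_nonneg hm_nonpos (sub_nonneg.2 hm_le))
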